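/- In the generalized matching-pennies game (I_m, −I_m), for any 0 ≤ ε ≤ 1/m, every ε-well-supported Nash equilibrium (x, y) satisfies ‖x − u_m‖₁ ≤ mε and ‖y − u_m‖₁ ≤ mε, where u_m is the uniform distribution on [m]. -/

import Mathlib

/-!
For the game `(I, -I)` a pure row strategy `i` is an `ε`-best response iff `y i` is within `ε`
of the largest coordinate of `y`, and a pure column strategy `j` iff `x j` is within `ε` of the
smallest coordinate of `x`. Because `(m - 1) ε < 1`, a coordinate of a probability vector that
is within `ε` of all the others is positive. Applied to `y` this gives `supp x ⊆ supp y`; applied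
to `x` it then shows that `x`, and hence `y`, has full support. So the well-supported conditions
hold at every coordinate: all coordinates of `x` (and of `y`) lie within `ε` of each other,
hence within `ε` of their mean `1 / m`.
-/

open Finset

def InSimplex {m : ℕ} (x : Fin m → ℝ) : Prop :=
  (∀ i, 0 ≤ x i) ∧ ∑ i, x i = 1

def IsWNE {m : ℕ} (R C : Matrix (Fin m) (Fin m) ℝ) (ε : ℝ)
    (x y : Fin m → ℝ) : Prop :=
  (∀ i, 0 < x i → ∀ k, ∑ j, R k j * y j - ε ≤ ∑ j, R i j * y j) ∧
  (∀ j, 0 < y j → ∀ k, ∑ i, x i * C i k - ε ≤ ∑ i, x i * C i j)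

theorem isWNE_one_neg_one_iff {m : ℕ} {ε : ℝ} {x y : Fin m → ℝ} :
    IsWNE (1 : Matrix (Fin m) (Fin m) ℝ) (-1) ε x y ↔
      (∀ i, 0 < x i → ∀ k, y k ≤ y i + ε) ∧ (∀ j, 0 < y j → ∀ k, x j ≤ x k + ε) := by
  simp [IsWNE, Matrix.one_apply, add_comm]

section ProbabilityVector

variable {ι : Type*} [Fintype ι] {z : ι → ℝ} {ε : ℝ}

theorem pos_of_forall_le_add (hz : ∑ i, z i = 1) (hε : ((Fintype.card ι : ℝ) - 1) * ε < 1)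
    {j : ι} (h : ∀ k, z k ≤ z j + ε) : 0 < z j := by
  have hε_le : ε ≤ ∑ k, (z j + ε - z k) := by
    simpa using single_le_sum (fun k _ => sub_nonneg.mpr (h k)) (mem_univ j)
  have hcard : 0 < (Fintype.card ι : ℝ) * z j := by
    rw [sum_sub_distrib, sum_const, card_univ, nsmul_eq_mul, hz] at hε_le
    linarith
  exact pos_of_mul_pos_right hcard (Nat.cast_nonneg _)

theorem abs_sub_inv_card_le [Nonempty ι] (hz : ∑ i, z i = 1) (h : ∀ j k, z k ≤ z j + ε)
    (i : ι) : |z i - 1 / Fintype.card ι| ≤ ε := by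
  have hcard : (0 : ℝ) < Fintype.card ι := by exact_mod_cast Fintype.card_pos
  have hmean : z i - 1 / Fintype.card ι = (∑ k, (z i - z k)) / Fintype.card ι := by
    rw [sum_sub_distrib, sum_const, card_univ, nsmul_eq_mul, hz]
    field_simp
  rw [hmean, abs_div, abs_of_pos hcard, div_le_iff₀ hcard]
  calc |∑ k, (z i - z k)| ≤ ∑ k, |z i - z k| := abs_sum_le_sum_abs _ _
    _ ≤ ∑ _k : ι, ε :=
      sum_le_sum fun k _ => abs_sub_le_iff.mpr ⟨by linarith [h k i], by linarith [h i k]⟩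
    _ = ε * Fintype.card ι := by rw [sum_const, card_univ, nsmul_eq_mul, mul_comm]

theorem sum_abs_sub_inv_card_le [Nonempty ι] (hz : ∑ i, z i = 1) (h : ∀ j k, z k ≤ z j + ε) :
    ∑ i, |z i - 1 / Fintype.card ι| ≤ Fintype.card ι * ε := by
  simpa using sum_le_sum fun i (_ : i ∈ univ) => abs_sub_inv_card_le hz h i

end ProbabilityVector

/-- every ε-WNE of generalized matching pennies (I_m, −I_m),
for 0 ≤ ε ≤ 1/m, is mε-close in ℓ₁ to (uniform, uniform). -/
theorem matchingPennies_wne_near_uniform {m : ℕ} (hm : 0 < m)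
    (ε : ℝ) (hε0 : 0 ≤ ε) (hε : ε ≤ 1 / m)
    (x y : Fin m → ℝ) (hx : InSimplex x) (hy : InSimplex y)
    (h : IsWNE (1 : Matrix (Fin m) (Fin m) ℝ) (-(1 : Matrix (Fin m) (Fin m) ℝ)) ε x y) :
    (∑ i, |x i - 1 / m| ≤ m * ε) ∧ (∑ i, |y i - 1 / m| ≤ m * ε) := by
  obtain ⟨hx0, hx1⟩ := hx
  obtain ⟨hy0, hy1⟩ := hy
  obtain ⟨hrow, hcol⟩ := isWNE_one_neg_one_iff.mp h
  have : Nonempty (Fin m) := Fin.pos_iff_nonempty.mp hm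
  have hmε : (m : ℝ) * ε ≤ 1 := by rwa [← le_div_iff₀' (by exact_mod_cast hm)]
  have hε' : ((Fintype.card (Fin m) : ℝ) - 1) * ε < 1 := by
    rw [Fintype.card_fin]
    rcases hε0.eq_or_lt with rfl | hε_pos
    · simp
    · linarith
  have hsupp : ∀ i, 0 < x i → 0 < y i := fun i hi => pos_of_forall_le_add hy1 hε' (hrow i hi)
  have hx_pos : ∀ j, 0 < x j := fun j => pos_of_forall_le_add hx1 hε' fun k => by
    rcases (hx0 k).lt_or_eq with hk | hk
    · exact hcol k (hsupp k hk) j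
    · linarith [hx0 j]
  have hy_pos : ∀ j, 0 < y j := fun j => hsupp j (hx_pos j)
  constructor
  · simpa using sum_abs_sub_inv_card_le hx1 fun j k => hcol k (hy_pos k) j
  · simpa using sum_abs_sub_inv_card_le hy1 fun j k => hrow j (hx_pos j) k
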